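/- arXiv:2402.05155 — 5 statements merged into one kernel-verified Lean document; each statement's English description precedes it below -/
import Mathlib

section
/- Let $n \in \mathbb{N}$, $i \in \{1,\dots,n\}$, let $f \colon \mathbb{R}^n \to \mathbb{R}$ be locally Lipschitz continuous, assume that for all $x = (x_1,\dots,x_n) \in \mathbb{R}^n$ the function $t \mapsto f(x_1,\dots,x_{i-1},t,x_{i+1},\dots,x_n)$ is differentiable at $x_i$, and assume the map $x \mapsto (\partial f/\partial x_i)(x)$ is continuous. Then for every $x \in \mathbb{R}^n$ and every $y = (y_1,\dots,y_n)$ in the Clarke subdifferential $\partial_C f(x)$ it holds that $y_i = (\partial f/\partial x_i)(x)$. -/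
open Filter Topology

/-- The Clarke subdifferential of a locally Lipschitz function `f : ℝⁿ → ℝ` at `x`:
the convex hull of all limits of gradients `∇f(zₖ)` along sequences of points of
differentiability `zₖ → x`. -/
noncomputable def clarkeSubdiff {n : ℕ} (f : EuclideanSpace ℝ (Fin n) → ℝ)
    (x : EuclideanSpace ℝ (Fin n)) : Set (EuclideanSpace ℝ (Fin n)) :=
  convexHull ℝ {y | ∃ z : ℕ → EuclideanSpace ℝ (Fin n),
    (∀ k, DifferentiableAt ℝ f (z k)) ∧ Tendsto z atTop (𝓝 x) ∧
      Tendsto (fun k => gradient f (z k)) atTop (𝓝 y)}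

lemma grad_coord {n : ℕ} (i : Fin n) (f : EuclideanSpace ℝ (Fin n) → ℝ)
    (z : EuclideanSpace ℝ (Fin n)) (hz : DifferentiableAt ℝ f z) :
    gradient f z i = deriv (fun t : ℝ => f (WithLp.toLp 2 (Function.update z i t))) (z i) := by
  let γ : ℝ → EuclideanSpace ℝ (Fin n) := fun t => WithLp.toLp 2 (Function.update z i t)
  have h1 : HasDerivAt γ (EuclideanSpace.single i (1:ℝ)) (z i) := by
    have he : γ = fun t => z + (t - z i) • EuclideanSpace.single i (1:ℝ) := by
      funext t; ext j
      show (WithLp.toLp 2 (Function.update z i t)) j = z j + (t - z i) * EuclideanSpace.single i (1:ℝ) j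
      by_cases h : j = i
      · subst h; simp
      · simp [Function.update_of_ne h, EuclideanSpace.single_apply, h]
    rw [he]
    simpa using (((hasDerivAt_id (z i)).sub_const (z i)).smul_const
      (EuclideanSpace.single i (1:ℝ))).const_add z
  have h2 : HasDerivAt (fun t : ℝ => f (WithLp.toLp 2 (Function.update z i t)))
      (fderiv ℝ f z (EuclideanSpace.single i (1:ℝ))) (z i) := by
    have hγ : γ (z i) = z := by
      show WithLp.toLp 2 (Function.update z i (z i)) = z; rw [Function.update_eq_self]
    have hf : HasFDerivAt f (fderiv ℝ f z) (γ (z i)) := by rw [hγ]; exact hz.hasFDerivAt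
    exact hf.comp_hasDerivAt (z i) h1
  rw [h2.deriv]
  have h4 : inner (𝕜 := ℝ) (gradient f z) (EuclideanSpace.single i (1:ℝ))
      = fderiv ℝ f z (EuclideanSpace.single i (1:ℝ)) := by
    simp [gradient, InnerProductSpace.toDual_symm_apply]
  rw [← h4]
  rw [EuclideanSpace.inner_single_right]; simp

/-- If `f` is locally Lipschitz, everywhere partially differentiable in the `i`-th
coordinate with continuous `i`-th partial derivative, then every element of the Clarke
subdifferential has `i`-th coordinate equal to this partial derivative. -/
theorem stmt1 (n : ℕ) (i : Fin n) (f : EuclideanSpace ℝ (Fin n) → ℝ)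
    (hlip : LocallyLipschitz f)
    (hdiff : ∀ x : EuclideanSpace ℝ (Fin n),
      DifferentiableAt ℝ (fun t : ℝ => f (WithLp.toLp 2 (Function.update x i t))) (x i))
    (hcont : Continuous (fun x : EuclideanSpace ℝ (Fin n) =>
      deriv (fun t : ℝ => f (WithLp.toLp 2 (Function.update x i t))) (x i)))
    (x : EuclideanSpace ℝ (Fin n)) (y : EuclideanSpace ℝ (Fin n))
    (hy : y ∈ clarkeSubdiff f x) :
    y i = deriv (fun t : ℝ => f (WithLp.toLp 2 (Function.update x i t))) (x i) := by
  set g : EuclideanSpace ℝ (Fin n) → ℝ :=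
    fun x => deriv (fun t : ℝ => f (WithLp.toLp 2 (Function.update x i t))) (x i) with hg
  change y i = g x
  set T : Set (EuclideanSpace ℝ (Fin n)) := {y | y i = g x} with hT
  have hconv : Convex ℝ T := by
    intro a ha b hb s t hs ht hst
    simp only [hT, Set.mem_setOf_eq] at ha hb ⊢
    have : (s • a + t • b) i = s * a i + t * b i := by
      simp [PiLp.add_apply, PiLp.smul_apply, smul_eq_mul]
    rw [this, ha, hb, ← add_mul, hst, one_mul]
  have hsub : {y | ∃ z : ℕ → EuclideanSpace ℝ (Fin n),
      (∀ k, DifferentiableAt ℝ f (z k)) ∧ Tendsto z atTop (𝓝 x) ∧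
        Tendsto (fun k => gradient f (z k)) atTop (𝓝 y)} ⊆ T := by
    rintro w ⟨z, hdz, hzx, hgrad⟩
    have h1 : Tendsto (fun k => gradient f (z k) i) atTop (𝓝 (w i)) :=
      ((EuclideanSpace.proj i : EuclideanSpace ℝ (Fin n) →L[ℝ] ℝ).continuous.tendsto w).comp hgrad
    have h2 : Tendsto (fun k => g (z k)) atTop (𝓝 (g x)) :=
      (hcont.tendsto x).comp hzx
    have heq : (fun k => gradient f (z k) i) = fun k => g (z k) := by
      funext k; exact grad_coord i f (z k) (hdz k)
    rw [heq] at h1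
    exact tendsto_nhds_unique h1 h2
  exact convexHull_min hsub hconv hy
end

section
/- In the deep ANN setting with a locally Lipschitz continuous activation function $\sigma$, for every architecture $\ell = (\ell_0,\dots,\ell_L) \in \mathbb{N}^{L+1}$ with $\ell_0 = d_I$ and $\ell_L = d_O$, the risk function $\mathcal{L}_\ell \colon \mathbb{R}^{\mathfrak{d}_\ell} \to \mathbb{R}$ defined by $\mathcal{L}_\ell(\theta) = \int_{[a,b]^{d_I}} \|\mathcal{N}^{\ell,L,\theta}(x) - f(x)\|^2\,\mu(dx)$ is locally Lipschitz continuous. -/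
open MeasureTheory Filter Topology

/-- Parameter space of a fully connected feedforward ANN with `L` affine layers and
layer dimensions `ℓ 0, ℓ 1, …, ℓ L`: for each layer a weight matrix and a bias vector. -/
abbrev Params (L : ℕ) (ℓ : ℕ → ℕ) : Type :=
  (k : Fin L) → ((Fin (ℓ (k.1 + 1)) → Fin (ℓ k.1) → ℝ) × (Fin (ℓ (k.1 + 1)) → ℝ))

noncomputable def weightOf {L : ℕ} {ℓ : ℕ → ℕ} (θ : Params L ℓ) (k : ℕ) :
    Fin (ℓ (k + 1)) → Fin (ℓ k) → ℝ :=
  if h : k < L then (θ ⟨k, h⟩).1 else fun _ _ => 0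

noncomputable def biasOf {L : ℕ} {ℓ : ℕ → ℕ} (θ : Params L ℓ) (k : ℕ) :
    Fin (ℓ (k + 1)) → ℝ :=
  if h : k < L then (θ ⟨k, h⟩).2 else fun _ => 0

/-- `layer σ θ x k` is the output of the `k`-th layer (before activation) of the
ANN with parameters `θ` applied to input `x`; the activation applied to the
`k`-th hidden layer is `σ k`. -/
noncomputable def layer {L : ℕ} {ℓ : ℕ → ℕ} (σ : ℕ → ℝ → ℝ) (θ : Params L ℓ)
    (x : Fin (ℓ 0) → ℝ) : (k : ℕ) → Fin (ℓ k) → ℝ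
  | 0 => x
  | (k + 1) => fun i => biasOf θ k i + ∑ j, weightOf θ k i j *
      (if k = 0 then layer σ θ x k j else σ k (layer σ θ x k j))

/-- The `L²`-risk of the ANN with parameters `θ` against the target `f` over `[a,b]^{ℓ 0}`. -/
noncomputable def drisk (L : ℕ) (ℓ : ℕ → ℕ) (a b : ℝ) (σ : ℕ → ℝ → ℝ)
    (μ : Measure (Fin (ℓ 0) → ℝ)) (f : (Fin (ℓ 0) → ℝ) → (Fin (ℓ L) → ℝ))
    (θ : Params L ℓ) : ℝ :=
  ∫ x in Set.Icc (fun _ => a) (fun _ => b), (∑ i, (layer σ θ x L i - f x i) ^ 2) ∂μ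

lemma ll_mul {X : Type*} [MetricSpace X] {f g : X → ℝ}
    (hf : LocallyLipschitz f) (hg : LocallyLipschitz g) :
    LocallyLipschitz (fun x => f x * g x) := by
  have h : ContDiff ℝ 1 (fun p : ℝ × ℝ => p.1 * p.2) := contDiff_fst.mul contDiff_snd
  exact h.locallyLipschitz.comp (hf.prodMk hg)

lemma ll_sum {X : Type*} [MetricSpace X] {ι : Type*} (s : Finset ι) (f : ι → X → ℝ)
    (h : ∀ i ∈ s, LocallyLipschitz (f i)) :
    LocallyLipschitz (fun x => ∑ i ∈ s, f i x) := by
  classical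
  induction s using Finset.induction with
  | empty => simpa using LocallyLipschitz.const (0 : ℝ)
  | @insert a s ha ih =>
    simp only [Finset.sum_insert ha]
    exact (h a (Finset.mem_insert_self a s)).add
      (ih fun i hi => h i (Finset.mem_insert_of_mem hi))

lemma layer_ll (L : ℕ) (ℓ : ℕ → ℕ) (σ : ℝ → ℝ) (hσ : LocallyLipschitz σ) :
    ∀ (k : ℕ) (i : Fin (ℓ k)), LocallyLipschitz
      (fun p : Params L ℓ × (Fin (ℓ 0) → ℝ) => layer (fun _ => σ) p.1 p.2 k i) := by
  intro k
  induction k with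
  | zero =>
    intro i
    have : LipschitzWith 1 (fun p : Params L ℓ × (Fin (ℓ 0) → ℝ) => p.2 i) := by
      have h0 := (LipschitzWith.eval (α := fun _ : Fin (ℓ 0) => ℝ) i).comp
        (LipschitzWith.prod_snd (α := Params L ℓ))
      rw [one_mul] at h0; exact h0
    exact this.locallyLipschitz
  | succ k ih =>
    intro i
    simp only [layer]
    have hbias : LocallyLipschitz
        (fun p : Params L ℓ × (Fin (ℓ 0) → ℝ) => biasOf p.1 k i) := by
      by_cases h : k < L
      · have h1 := ((LipschitzWith.eval (α := fun _ : Fin (ℓ (k+1)) => ℝ) i).comp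
            ((LipschitzWith.prod_snd).comp
              ((LipschitzWith.eval (⟨k, h⟩ : Fin L)).comp
                (LipschitzWith.prod_fst (α := Params L ℓ) (β := Fin (ℓ 0) → ℝ)))))
        have : LipschitzWith (1*(1*(1*1)))
            (fun p : Params L ℓ × (Fin (ℓ 0) → ℝ) => (p.1 ⟨k, h⟩).2 i) := h1
        have heq : (fun p : Params L ℓ × (Fin (ℓ 0) → ℝ) => biasOf p.1 k i)
            = fun p => (p.1 ⟨k, h⟩).2 i := by
          funext p; simp [biasOf, h]
        rw [heq]; exact this.locallyLipschitz
      · have heq : (fun p : Params L ℓ × (Fin (ℓ 0) → ℝ) => biasOf p.1 k i)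
            = fun _ => (0 : ℝ) := by
          funext p; simp [biasOf, h]
        rw [heq]; exact LocallyLipschitz.const 0
    refine hbias.add (ll_sum Finset.univ _ fun j _ => ll_mul ?_ ?_)
    · by_cases h : k < L
      · have h1 := ((LipschitzWith.eval (α := fun _ : Fin (ℓ k) => ℝ) j).comp
            (((LipschitzWith.eval (α := fun _ : Fin (ℓ (k+1)) => (Fin (ℓ k) → ℝ)) i).comp
              (LipschitzWith.prod_fst)).comp
              ((LipschitzWith.eval (⟨k, h⟩ : Fin L)).comp
                (LipschitzWith.prod_fst (α := Params L ℓ) (β := Fin (ℓ 0) → ℝ)))))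
        have : LipschitzWith (1*(1*1*(1*1)))
            (fun p : Params L ℓ × (Fin (ℓ 0) → ℝ) => (p.1 ⟨k, h⟩).1 i j) := h1
        have heq : (fun p : Params L ℓ × (Fin (ℓ 0) → ℝ) => weightOf p.1 k i j)
            = fun p => (p.1 ⟨k, h⟩).1 i j := by
          funext p; simp [weightOf, h]
        rw [heq]; exact this.locallyLipschitz
      · have heq : (fun p : Params L ℓ × (Fin (ℓ 0) → ℝ) => weightOf p.1 k i j)
            = fun _ => (0 : ℝ) := by
          funext p; simp [weightOf, h]
        rw [heq]; exact LocallyLipschitz.const 0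
    · by_cases hk : k = 0
      · simpa [hk] using ih j
      · simp only [hk, ↓reduceIte]; exact hσ.comp (ih j)

open Set Metric NNReal in
lemma ll_compact {X Y : Type*} [MetricSpace X] [MetricSpace Y] {f : X → Y}
    (hf : LocallyLipschitz f) {s : Set X} (hs : IsCompact s) :
    ∃ K : ℝ, 0 ≤ K ∧ ∀ p ∈ s, ∀ q ∈ s, dist (f p) (f q) ≤ K * dist p q := by
  classical
  have hfc : Continuous f := hf.continuous
  choose K t ht hK using hf
  have hcover : s ⊆ ⋃ x ∈ s, interior (t x) := fun x hx =>
    mem_iUnion₂.2 ⟨x, hx, mem_interior_iff_mem_nhds.2 (ht x)⟩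
  obtain ⟨b, hbs, hbfin, hbcov⟩ := hs.elim_finite_subcover_image
    (fun x _ => isOpen_interior) hcover
  have hbcov' : s ⊆ ⋃ i : b, interior (t i.1) := by
    simpa [Set.iUnion_subtype] using hbcov
  obtain ⟨δ, hδ0, hδ⟩ := lebesgue_number_lemma_of_metric hs
    (fun i : b => isOpen_interior) hbcov'
  have hbnd : Bornology.IsBounded (f '' s) :=
    (hs.image hfc).isBounded
  set D := Metric.diam (f '' s) with hD
  have hD0 : 0 ≤ D := Metric.diam_nonneg
  set C : ℝ := ((hbfin.toFinset.sup K : ℝ≥0) : ℝ) with hC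
  refine ⟨max C (D / δ), le_trans (by positivity) (le_max_left _ _), ?_⟩
  intro p hp q hq
  by_cases hlt : dist p q < δ
  · obtain ⟨i, hball⟩ := hδ p hp
    have hpq : p ∈ t i.1 ∧ q ∈ t i.1 := by
      constructor
      · exact interior_subset (hball (mem_ball_self hδ0))
      · exact interior_subset (hball (by simpa [mem_ball, dist_comm] using hlt))
    have h1 : dist (f p) (f q) ≤ (K i.1 : ℝ) * dist p q :=
      (lipschitzOnWith_iff_dist_le_mul.1 (hK i.1)) p hpq.1 q hpq.2
    have h2 : (K i.1 : ℝ) ≤ C := by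
      have := Finset.le_sup (f := K) (hbfin.mem_toFinset.2 i.2)
      rw [hC]
      exact_mod_cast this
    calc dist (f p) (f q) ≤ (K i.1 : ℝ) * dist p q := h1
      _ ≤ C * dist p q := by nlinarith [dist_nonneg (x := p) (y := q)]
      _ ≤ max C (D / δ) * dist p q := by
          nlinarith [dist_nonneg (x := p) (y := q), le_max_left C (D/δ)]
  · push_neg at hlt
    have h1 : dist (f p) (f q) ≤ D :=
      Metric.dist_le_diam_of_mem hbnd ⟨p, hp, rfl⟩ ⟨q, hq, rfl⟩
    have h2 : D ≤ (D / δ) * dist p q := by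
      rw [div_mul_eq_mul_div, le_div_iff₀ hδ0]
      nlinarith
    calc dist (f p) (f q) ≤ (D/δ) * dist p q := h1.trans h2
      _ ≤ max C (D / δ) * dist p q := by
          nlinarith [dist_nonneg (x := p) (y := q), le_max_right C (D/δ)]

/-- If the activation `σ` is locally Lipschitz continuous, then the risk function of a
deep fully connected ANN is locally Lipschitz continuous. -/
theorem stmt5 (L : ℕ) (hL : 0 < L) (ℓ : ℕ → ℕ) (hℓ : ∀ k, 0 < ℓ k)
    (a b : ℝ) (hab : a < b) (σ : ℝ → ℝ) (hσ : LocallyLipschitz σ)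
    (μ : Measure (Fin (ℓ 0) → ℝ)) [IsFiniteMeasure μ]
    (f : (Fin (ℓ 0) → ℝ) → (Fin (ℓ L) → ℝ)) (hf : Measurable f)
    (hf2 : Integrable (fun x => ∑ i, (f x i) ^ 2)
      (μ.restrict (Set.Icc (fun _ => a) (fun _ => b)))) :
    LocallyLipschitz (drisk L ℓ a b (fun _ => σ) μ f) := by
  classical
  intro θ₀
  set Ic : Set (Fin (ℓ 0) → ℝ) := Set.Icc (fun _ => a) (fun _ => b) with hIc
  have hIcm : MeasurableSet Ic := measurableSet_Icc
  set ν := μ.restrict Ic with hν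
  have hνfin : IsFiniteMeasure ν := by rw [hν]; infer_instance
  set B := Metric.closedBall θ₀ 1 with hB
  have hBmem : B ∈ 𝓝 θ₀ := Metric.closedBall_mem_nhds θ₀ one_pos
  have hBc : IsCompact B := isCompact_closedBall θ₀ 1
  have hIcc : IsCompact Ic := isCompact_Icc
  have hS : IsCompact (B ×ˢ Ic) := hBc.prod hIcc
  have hll : ∀ i : Fin (ℓ L), LocallyLipschitz fun p : Params L ℓ × (Fin (ℓ 0) → ℝ) =>
      layer (fun _ => σ) p.1 p.2 L i := fun i => layer_ll L ℓ σ hσ L i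
  choose K hK0 hKlip using fun i => ll_compact (hll i) hS
  set K₀ : ℝ := ∑ i, K i with hK₀
  have hK₀0 : 0 ≤ K₀ := Finset.sum_nonneg fun i _ => hK0 i
  have hKi : ∀ i, K i ≤ K₀ :=
    fun i => Finset.single_le_sum (f := K) (fun j _ => hK0 j) (Finset.mem_univ i)
  have hcont : Continuous fun p : Params L ℓ × (Fin (ℓ 0) → ℝ) =>
      (fun i => layer (fun _ => σ) p.1 p.2 L i) := continuous_pi fun i => (hll i).continuous
  obtain ⟨M, hM⟩ := hS.exists_bound_of_continuousOn hcont.continuousOn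
  have hMb : ∀ θ ∈ B, ∀ x ∈ Ic, ∀ i, |layer (fun _ => σ) θ x L i| ≤ M := by
    intro θ hθ x hx i
    have h1 := hM (θ, x) (Set.mk_mem_prod hθ hx)
    have h2 := norm_le_pi_norm (fun i => layer (fun _ => σ) θ x L i) i
    simpa [Real.norm_eq_abs] using h2.trans h1
  have hM0 : 0 ≤ M := by
    have hxa : (fun _ : Fin (ℓ 0) => a) ∈ Ic := Set.left_mem_Icc.2 fun _ => hab.le
    exact (abs_nonneg _).trans
      (hMb θ₀ (Metric.mem_closedBall_self zero_le_one) _ hxa ⟨0, hℓ L⟩)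
  have hLip : ∀ θ ∈ B, ∀ θ' ∈ B, ∀ x ∈ Ic, ∀ i : Fin (ℓ L),
      |layer (fun _ => σ) θ x L i - layer (fun _ => σ) θ' x L i| ≤ K₀ * dist θ θ' := by
    intro θ hθ θ' hθ' x hx i
    have h1 := hKlip i (θ, x) (Set.mk_mem_prod hθ hx) (θ', x) (Set.mk_mem_prod hθ' hx)
    have h2 : dist ((θ, x) : Params L ℓ × (Fin (ℓ 0) → ℝ)) (θ', x) = dist θ θ' := by
      simp [Prod.dist_eq, dist_nonneg]
    rw [h2, Real.dist_eq] at h1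
    exact h1.trans (by nlinarith [dist_nonneg (x := θ) (y := θ'), hKi i, hK0 i])
  set g : Params L ℓ → (Fin (ℓ 0) → ℝ) → ℝ :=
    fun θ x => ∑ i, (layer (fun _ => σ) θ x L i - f x i) ^ 2 with hg
  have hmg : ∀ θ, Measurable (g θ) := by
    intro θ
    apply Finset.measurable_sum
    intro i _
    have hc : Continuous fun x => layer (fun _ => σ) θ x L i :=
      (hll i).continuous.comp (Continuous.prodMk_right θ)
    exact (hc.measurable.sub ((measurable_pi_apply i).comp hf)).pow_const 2
  have hgint : ∀ θ ∈ B, Integrable (g θ) ν := by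
    intro θ hθ
    refine Integrable.mono' ((integrable_const (2 * M ^ 2 * (ℓ L : ℝ))).add (hf2.const_mul 2))
      (hmg θ).aestronglyMeasurable ?_
    filter_upwards [ae_restrict_mem hIcm] with x hx
    have h0 : 0 ≤ g θ x := Finset.sum_nonneg fun i _ => sq_nonneg _
    rw [Real.norm_eq_abs, abs_of_nonneg h0]
    have hterm : ∀ i : Fin (ℓ L),
        (layer (fun _ => σ) θ x L i - f x i) ^ 2 ≤ 2 * M ^ 2 + 2 * (f x i) ^ 2 := by
      intro i
      have h1 := hMb θ hθ x hx i
      have h2 := abs_nonneg (layer (fun _ => σ) θ x L i)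
      have h3 := le_abs_self (layer (fun _ => σ) θ x L i)
      have h4 := neg_abs_le (layer (fun _ => σ) θ x L i)
      nlinarith [sq_nonneg (layer (fun _ => σ) θ x L i + f x i)]
    calc g θ x ≤ ∑ i : Fin (ℓ L), (2 * M ^ 2 + 2 * (f x i) ^ 2) :=
          Finset.sum_le_sum fun i _ => hterm i
      _ = 2 * M ^ 2 * (ℓ L : ℝ) + 2 * ∑ i, (f x i) ^ 2 := by
          rw [Finset.sum_add_distrib, Finset.sum_const, Finset.mul_sum]
          simp [Finset.card_univ, mul_comm]
  set h : (Fin (ℓ 0) → ℝ) → ℝ := fun x => 2 * M * (ℓ L : ℝ) + 2 * ∑ i, |f x i| with hh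
  have hh0 : ∀ x, 0 ≤ h x := by
    intro x
    have : 0 ≤ ∑ i : Fin (ℓ L), |f x i| := Finset.sum_nonneg fun i _ => abs_nonneg _
    positivity
  have hmh : Measurable h := by
    apply Measurable.const_add
    apply Measurable.const_mul
    exact Finset.measurable_sum _ fun i _ => ((measurable_pi_apply i).comp hf).abs
  have hhint : Integrable h ν := by
    refine Integrable.mono'
      ((integrable_const (2 * M * (ℓ L : ℝ) + (ℓ L : ℝ))).add hf2)
      hmh.aestronglyMeasurable ?_
    filter_upwards with x
    rw [Real.norm_eq_abs, abs_of_nonneg (hh0 x)]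
    have hterm : ∀ i : Fin (ℓ L), 2 * |f x i| ≤ 1 + (f x i) ^ 2 := by
      intro i
      have h1 := sq_abs (f x i)
      nlinarith [sq_nonneg (|f x i| - 1)]
    have : 2 * ∑ i : Fin (ℓ L), |f x i| ≤ (ℓ L : ℝ) + ∑ i, (f x i) ^ 2 := by
      rw [Finset.mul_sum]
      calc ∑ i : Fin (ℓ L), 2 * |f x i| ≤ ∑ i : Fin (ℓ L), (1 + (f x i) ^ 2) :=
            Finset.sum_le_sum fun i _ => hterm i
        _ = (ℓ L : ℝ) + ∑ i, (f x i) ^ 2 := by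
            rw [Finset.sum_add_distrib]; simp [Finset.card_univ]
    simp only [hh, Pi.add_apply]; linarith
  have hkey : ∀ θ ∈ B, ∀ θ' ∈ B, ∀ x ∈ Ic,
      |g θ x - g θ' x| ≤ (K₀ * dist θ θ') * h x := by
    intro θ hθ θ' hθ' x hx
    have hsplit : g θ x - g θ' x = ∑ i : Fin (ℓ L),
        ((layer (fun _ => σ) θ x L i - f x i) ^ 2
          - (layer (fun _ => σ) θ' x L i - f x i) ^ 2) := by
      rw [hg, ← Finset.sum_sub_distrib]
    rw [hsplit]
    refine (Finset.abs_sum_le_sum_abs _ _).trans ?_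
    have hterm : ∀ i ∈ Finset.univ (α := Fin (ℓ L)),
        |(layer (fun _ => σ) θ x L i - f x i) ^ 2
          - (layer (fun _ => σ) θ' x L i - f x i) ^ 2|
          ≤ (K₀ * dist θ θ') * (2 * M + 2 * |f x i|) := by
      intro i _
      set A := layer (fun _ => σ) θ x L i
      set A' := layer (fun _ => σ) θ' x L i
      have e1 : (A - f x i) ^ 2 - (A' - f x i) ^ 2
          = (A - A') * (A + A' - 2 * f x i) := by ring
      rw [e1, abs_mul]
      have h1 := hLip θ hθ θ' hθ' x hx i
      have h2 : |A + A' - 2 * f x i| ≤ 2 * M + 2 * |f x i| := by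
        have hA := hMb θ hθ x hx i
        have hA' := hMb θ' hθ' x hx i
        have := le_abs_self A
        have := neg_abs_le A
        have := le_abs_self A'
        have := neg_abs_le A'
        have := le_abs_self (f x i)
        have := neg_abs_le (f x i)
        rw [abs_le]
        constructor <;> nlinarith
      have h3 : (0:ℝ) ≤ 2 * M + 2 * |f x i| := by positivity
      exact mul_le_mul h1 h2 (abs_nonneg _) (by positivity)
    refine (Finset.sum_le_sum hterm).trans ?_
    rw [← Finset.mul_sum, hh]
    have : ∑ i : Fin (ℓ L), (2 * M + 2 * |f x i|)
        = 2 * M * (ℓ L : ℝ) + 2 * ∑ i, |f x i| := by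
      rw [Finset.sum_add_distrib, Finset.sum_const, Finset.mul_sum]
      simp [Finset.card_univ, mul_comm]
    rw [this]
  have hhI : 0 ≤ ∫ x, h x ∂ν := integral_nonneg hh0
  refine ⟨Real.toNNReal (K₀ * ∫ x, h x ∂ν), B, hBmem, ?_⟩
  rw [lipschitzOnWith_iff_dist_le_mul]
  intro θ hθ θ' hθ'
  rw [Real.coe_toNNReal _ (by positivity)]
  have e1 : ∀ η, drisk L ℓ a b (fun _ => σ) μ f η = ∫ x, g η x ∂ν := fun η => rfl
  rw [Real.dist_eq, e1, e1, ← integral_sub (hgint θ hθ) (hgint θ' hθ')]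
  calc |∫ x, (g θ x - g θ' x) ∂ν|
      ≤ ∫ x, |g θ x - g θ' x| ∂ν := by
        simpa [Real.norm_eq_abs] using
          norm_integral_le_integral_norm (fun x => g θ x - g θ' x) (μ := ν)
    _ ≤ ∫ x, (K₀ * dist θ θ') * h x ∂ν := by
        refine integral_mono_ae (((hgint θ hθ).sub (hgint θ' hθ')).abs)
          (hhint.const_mul _) ?_
        filter_upwards [ae_restrict_mem hIcm] with x hx
        exact hkey θ hθ θ' hθ' x hx
    _ = (K₀ * ∫ x, h x ∂ν) * dist θ θ' := by
        rw [MeasureTheory.integral_const_mul]; ring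
end

section
/- In the shallow ANN setting, suppose the activation $\sigma$ is constant on an open interval: there exist $\alpha < \beta$ with $\sigma(x) = \sigma(\alpha)$ for all $x \in (\alpha,\beta)$. Let $\width \le \mathfrak{H}$ be nonnegative integers and let $\theta \in \mathbb{R}^{\mathfrak{d}_\width}$ be a local minimum point of $\mathcal{L}_\width$. Then there exists $\vartheta \in \mathbb{R}^{\mathfrak{d}_{\mathfrak{H}}}$ such that (i) the realization functions agree, $\mathcal{N}^\vartheta = \mathcal{N}^\theta$ on $\mathbb{R}^d$, and (ii) $\vartheta$ is a local minimum point of $\mathcal{L}_{\mathfrak{H}}$. -/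
open MeasureTheory Filter Topology

noncomputable section

def cube (d : ℕ) (a b : ℝ) : Set (Fin d → ℝ) :=
  Set.Icc (fun _ => a) (fun _ => b)

lemma widx {d H : ℕ} (i : Fin H) (j : Fin d) : i.1 * d + j.1 < d * H + 2 * H + 1 := by
  have hj := j.2
  have h1 : i.1 * d + j.1 < (i.1 + 1) * d := by rw [Nat.succ_mul]; omega
  have h2 : (i.1 + 1) * d ≤ H * d := Nat.mul_le_mul_right d i.2
  have h3 : H * d = d * H := Nat.mul_comm H d
  omega

/-- Realization function of a shallow ANN with `H` hidden neurons. -/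
def srel (d H : ℕ) (σ : ℝ → ℝ) (θ : Fin (d * H + 2 * H + 1) → ℝ) (x : Fin d → ℝ) : ℝ :=
  θ ⟨d * H + 2 * H, by omega⟩ +
    ∑ i : Fin H, θ ⟨d * H + H + i.1, by have := i.2; omega⟩ *
      σ (θ ⟨d * H + i.1, by have := i.2; omega⟩ +
        ∑ j : Fin d, θ ⟨i.1 * d + j.1, widx i j⟩ * x j)

/-- The risk (squared `L²` error against the target `f` over `[a,b]^d`). -/
def srisk (d H : ℕ) (a b : ℝ) (σ : ℝ → ℝ) (μ : Measure (Fin d → ℝ))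
    (f : (Fin d → ℝ) → ℝ) (θ : Fin (d * H + 2 * H + 1) → ℝ) : ℝ :=
  ∫ x in cube d a b, (srel d H σ θ x - f x) ^ 2 ∂μ


/-- Infimum of the risk over all parameter vectors of width `H`. -/
def sinf (d H : ℕ) (a b : ℝ) (σ : ℝ → ℝ) (μ : Measure (Fin d → ℝ))
    (f : (Fin d → ℝ) → ℝ) : ℝ :=
  ⨅ θ : Fin (d * H + 2 * H + 1) → ℝ, srisk d H a b σ μ f θ

/-- `σ` is discriminatory for the measure `μ` on `K` (Cybenko). -/
def Discriminatory (d : ℕ) (K : Set (Fin d → ℝ)) (μ : Measure (Fin d → ℝ))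
    (σ : ℝ → ℝ) : Prop :=
  ∀ φ : (Fin d → ℝ) → ℝ, Measurable φ →
    Integrable φ (μ.restrict K) →
    (∀ (w : Fin d → ℝ) (c : ℝ), ∫ x in K, σ ((∑ j, w j * x j) + c) * φ x ∂μ = 0) →
    ∫ x in K, |φ x| ∂μ = 0

end

namespace S7

open Finset

lemma mulb {i j d H : ℕ} (hi : i < H) (hj : j < d) : i * d + j < d * H := by
  have h1 : i * d + j < (i + 1) * d := by rw [Nat.succ_mul]; omega
  have h2 : (i + 1) * d ≤ H * d := Nat.mul_le_mul_right d hi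
  have h3 : H * d = d * H := Nat.mul_comm H d
  omega

/-- weight of neuron `i`, coordinate `j` (0 if out of range). -/
def wte (d H : ℕ) (η : Fin (d * H + 2 * H + 1) → ℝ) (i j : ℕ) : ℝ :=
  if h : i < H ∧ j < d then η ⟨i * d + j, by have := mulb h.1 h.2; omega⟩ else 0

def bia (d H : ℕ) (η : Fin (d * H + 2 * H + 1) → ℝ) (i : ℕ) : ℝ :=
  if h : i < H then η ⟨d * H + i, by omega⟩ else 0

def owt (d H : ℕ) (η : Fin (d * H + 2 * H + 1) → ℝ) (i : ℕ) : ℝ :=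
  if h : i < H then η ⟨d * H + H + i, by omega⟩ else 0

def lst (d H : ℕ) (η : Fin (d * H + 2 * H + 1) → ℝ) : ℝ := η ⟨d * H + 2 * H, by omega⟩

lemma srel_eq (d H : ℕ) (σ : ℝ → ℝ) (η : Fin (d * H + 2 * H + 1) → ℝ) (x : Fin d → ℝ) :
    srel d H σ η x = lst d H η + ∑ i ∈ Finset.range H,
      owt d H η i * σ (bia d H η i + ∑ j : Fin d, wte d H η i j.1 * x j) := by
  unfold srel lst
  congr 1
  rw [← Fin.sum_univ_eq_sum_range (fun i => owt d H η i * σ (bia d H η i + ∑ j : Fin d, wte d H η i j.1 * x j)) H]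
  refine Finset.sum_congr rfl fun i _ => ?_
  have hi := i.2
  have hw : ∀ j : Fin d, wte d H η i.1 j.1 = η ⟨i.1 * d + j.1, widx i j⟩ := by
    intro j; unfold wte; rw [dif_pos ⟨hi, j.2⟩]
  simp only [owt, bia, dif_pos hi, hw]




variable {d H H' : ℕ}

/-- Embed a width-`H` parameter into width `H'`: extra neurons get zero weights,
bias `γ`, zero outgoing weight. -/
def embed (d H H' : ℕ) (hHH' : H ≤ H') (γ : ℝ) (θ : Fin (d * H + 2 * H + 1) → ℝ) :
    Fin (d * H' + 2 * H' + 1) → ℝ := fun k =>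
  if hw : k.1 < d * H' then
    (if h : k.1 < d * H then θ ⟨k.1, by omega⟩ else 0)
  else if hb : k.1 < d * H' + H' then
    (if h : k.1 - d * H' < H then θ ⟨d * H + (k.1 - d * H'), by omega⟩ else γ)
  else if ho : k.1 < d * H' + 2 * H' then
    (if h : k.1 - (d * H' + H') < H then θ ⟨d * H + H + (k.1 - (d * H' + H')), by omega⟩ else 0)
  else θ ⟨d * H + 2 * H, by omega⟩

/-- Restrict a width-`H'` parameter to width `H`, absorbing the extra neurons'
constant contribution (`s` per unit outgoing weight) into the output bias. -/
def restr (d H H' : ℕ) (hHH' : H ≤ H') (s : ℝ) (η : Fin (d * H' + 2 * H' + 1) → ℝ) :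
    Fin (d * H + 2 * H + 1) → ℝ := fun k =>
  if hw : k.1 < d * H then
    η ⟨k.1, by have : d * H ≤ d * H' := Nat.mul_le_mul_left d hHH'; omega⟩
  else if hb : k.1 < d * H + H then
    η ⟨d * H' + (k.1 - d * H), by omega⟩
  else if ho : k.1 < d * H + 2 * H then
    η ⟨d * H' + H' + (k.1 - (d * H + H)), by omega⟩
  else
    η ⟨d * H' + 2 * H', by omega⟩ + (∑ i ∈ Finset.Ico H H', owt d H' η i) * s

section comp
variable (hHH' : H ≤ H') (γ s : ℝ) (θ : Fin (d * H + 2 * H + 1) → ℝ)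
  (η : Fin (d * H' + 2 * H' + 1) → ℝ)

lemma embed_wte (i j : ℕ) : wte d H' (embed d H H' hHH' γ θ) i j = wte d H θ i j := by
  unfold wte
  by_cases h : i < H ∧ j < d
  · have h' : i < H' ∧ j < d := ⟨lt_of_lt_of_le h.1 hHH', h.2⟩
    rw [dif_pos h', dif_pos h]
    have hlt : i * d + j < d * H := mulb h.1 h.2
    have hlt' : i * d + j < d * H' := by
      have : d * H ≤ d * H' := Nat.mul_le_mul_left d hHH'; omega
    unfold embed
    simp only [Fin.val_mk]
    simp only [hlt', hlt, dif_pos]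
  · rw [dif_neg h]
    by_cases h' : i < H' ∧ j < d
    · rw [dif_pos h']
      have hge : H ≤ i := by omega
      have hge' : d * H ≤ i * d + j := by
        have h2 : H * d ≤ i * d := Nat.mul_le_mul_right d hge
        have h3 : H * d = d * H := Nat.mul_comm H d
        omega
      have hlt' : i * d + j < d * H' := mulb h'.1 h'.2
      unfold embed
      simp only [Fin.val_mk]
      simp only [hlt', dif_pos]
      rw [dif_neg (by omega)]
    · rw [dif_neg h']

lemma embed_bia_lt {i : ℕ} (hi : i < H) : bia d H' (embed d H H' hHH' γ θ) i = bia d H θ i := by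
  unfold bia
  rw [dif_pos hi, dif_pos (lt_of_lt_of_le hi hHH')]
  unfold embed
  simp only [Fin.val_mk]
  rw [dif_neg (by omega), dif_pos (by omega), dif_pos (by omega : d * H' + i - d * H' < H)]
  congr 1; exact Fin.ext (by simp only [Fin.val_mk]; omega)

lemma embed_bia_mid {i : ℕ} (hi : H ≤ i) (hi' : i < H') :
    bia d H' (embed d H H' hHH' γ θ) i = γ := by
  unfold bia
  rw [dif_pos hi']
  unfold embed
  simp only [Fin.val_mk]
  rw [dif_neg (by omega), dif_pos (by omega), dif_neg (by omega)]

lemma embed_owt (i : ℕ) : owt d H' (embed d H H' hHH' γ θ) i = owt d H θ i := by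
  unfold owt
  by_cases hi : i < H
  · rw [dif_pos hi, dif_pos (lt_of_lt_of_le hi hHH')]
    unfold embed
    simp only [Fin.val_mk]
    rw [dif_neg (by omega), dif_neg (by omega), dif_pos (by omega),
      dif_pos (by omega : d * H' + H' + i - (d * H' + H') < H)]
    congr 1; exact Fin.ext (by simp only [Fin.val_mk]; omega)
  · rw [dif_neg hi]
    by_cases hi' : i < H'
    · rw [dif_pos hi']
      unfold embed
      simp only [Fin.val_mk]
      rw [dif_neg (by omega), dif_neg (by omega), dif_pos (by omega), dif_neg (by omega)]
    · rw [dif_neg hi']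

lemma embed_lst : lst d H' (embed d H H' hHH' γ θ) = lst d H θ := by
  unfold lst embed
  simp only [Fin.val_mk]
  rw [dif_neg (by omega), dif_neg (by omega), dif_neg (by omega)]

lemma restr_wte {i : ℕ} (hi : i < H) (j : ℕ) :
    wte d H (restr d H H' hHH' s η) i j = wte d H' η i j := by
  unfold wte
  by_cases hj : j < d
  · rw [dif_pos ⟨hi, hj⟩, dif_pos ⟨lt_of_lt_of_le hi hHH', hj⟩]
    have hlt : i * d + j < d * H := mulb hi hj
    unfold restr
    simp only [Fin.val_mk]
    rw [dif_pos hlt]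
  · rw [dif_neg (by tauto), dif_neg (by tauto)]

lemma restr_bia {i : ℕ} (hi : i < H) :
    bia d H (restr d H H' hHH' s η) i = bia d H' η i := by
  unfold bia
  rw [dif_pos hi, dif_pos (lt_of_lt_of_le hi hHH')]
  unfold restr
  simp only [Fin.val_mk]
  have hge : ¬ (d * H + i < d * H) := by omega
  rw [dif_neg hge, dif_pos (by omega)]
  congr 1; exact Fin.ext (by simp only [Fin.val_mk]; omega)

lemma restr_owt {i : ℕ} (hi : i < H) :
    owt d H (restr d H H' hHH' s η) i = owt d H' η i := by
  unfold owt
  rw [dif_pos hi, dif_pos (lt_of_lt_of_le hi hHH')]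
  unfold restr
  simp only [Fin.val_mk]
  rw [dif_neg (by omega), dif_neg (by omega), dif_pos (by omega)]
  congr 1; exact Fin.ext (by simp only [Fin.val_mk]; omega)

lemma restr_lst :
    lst d H (restr d H H' hHH' s η) =
      lst d H' η + (∑ i ∈ Finset.Ico H H', owt d H' η i) * s := by
  unfold lst restr
  simp only [Fin.val_mk]
  rw [dif_neg (by omega), dif_neg (by omega), dif_neg (by omega)]

end comp



section real
variable (hHH' : H ≤ H') (γ s : ℝ) (σ : ℝ → ℝ) (θ : Fin (d * H + 2 * H + 1) → ℝ)
  (η : Fin (d * H' + 2 * H' + 1) → ℝ)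

lemma srel_embed (x : Fin d → ℝ) :
    srel d H' σ (embed d H H' hHH' γ θ) x = srel d H σ θ x := by
  rw [srel_eq, srel_eq, embed_lst]
  congr 1
  calc ∑ i ∈ Finset.range H', owt d H' (embed d H H' hHH' γ θ) i *
          σ (bia d H' (embed d H H' hHH' γ θ) i +
            ∑ j : Fin d, wte d H' (embed d H H' hHH' γ θ) i j.1 * x j)
      = ∑ i ∈ Finset.range H, owt d H' (embed d H H' hHH' γ θ) i *
          σ (bia d H' (embed d H H' hHH' γ θ) i +
            ∑ j : Fin d, wte d H' (embed d H H' hHH' γ θ) i j.1 * x j) := by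
        refine (Finset.sum_subset (Finset.range_subset_range.2 hHH') fun i _ hi => ?_).symm
        rw [embed_owt]
        have : owt d H θ i = 0 := by
          unfold owt; rw [dif_neg (by simpa using hi)]
        rw [this, zero_mul]
    _ = ∑ i ∈ Finset.range H, owt d H θ i *
          σ (bia d H θ i + ∑ j : Fin d, wte d H θ i j.1 * x j) := by
        refine Finset.sum_congr rfl fun i hi => ?_
        have hiH := Finset.mem_range.1 hi
        have hsum : ∑ j : Fin d, wte d H' (embed d H H' hHH' γ θ) i j.1 * x j
            = ∑ j : Fin d, wte d H θ i j.1 * x j :=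
          Finset.sum_congr rfl fun j _ => by rw [embed_wte]
        rw [embed_owt, embed_bia_lt hHH' γ θ hiH, hsum]

lemma restr_embed : restr d H H' hHH' s (embed d H H' hHH' γ θ) = θ := by
  funext k
  have hk := k.2
  unfold restr
  split_ifs with h1 h2 h3
  · unfold embed
    have hlt : k.1 < d * H' := by
      have : d * H ≤ d * H' := Nat.mul_le_mul_left d hHH'; omega
    simp only [Fin.val_mk]
    rw [dif_pos hlt, dif_pos h1]
  · unfold embed
    simp only [Fin.val_mk]
    rw [dif_neg (by omega), dif_pos (by omega), dif_pos (by omega)]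
    congr 1; exact Fin.ext (by simp only [Fin.val_mk]; omega)
  · unfold embed
    simp only [Fin.val_mk]
    rw [dif_neg (by omega), dif_neg (by omega), dif_pos (by omega), dif_pos (by omega)]
    congr 1; exact Fin.ext (by simp only [Fin.val_mk]; omega)
  · have hz : ∀ i ∈ Finset.Ico H H', owt d H' (embed d H H' hHH' γ θ) i = 0 := by
      intro i hi
      obtain ⟨hi1, _⟩ := Finset.mem_Ico.1 hi
      rw [embed_owt]
      unfold owt
      rw [dif_neg (by omega)]
    rw [Finset.sum_eq_zero hz, zero_mul, add_zero]
    unfold embed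
    simp only [Fin.val_mk]
    rw [dif_neg (by omega), dif_neg (by omega), dif_neg (by omega)]
    congr 1; exact Fin.ext (by simp only [Fin.val_mk]; omega)

lemma srel_restr (α β : ℝ) (hconst : ∀ x ∈ Set.Ioo α β, σ x = σ α) (x : Fin d → ℝ)
    (hpre : ∀ i, H ≤ i → i < H' →
      bia d H' η i + ∑ j : Fin d, wte d H' η i j.1 * x j ∈ Set.Ioo α β) :
    srel d H σ (restr d H H' hHH' (σ α) η) x = srel d H' σ η x := by
  rw [srel_eq, srel_eq, restr_lst]
  have hsplit : ∑ i ∈ Finset.range H', owt d H' η i * σ (bia d H' η i + ∑ j : Fin d, wte d H' η i j.1 * x j)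
      = (∑ i ∈ Finset.range H, owt d H' η i * σ (bia d H' η i + ∑ j : Fin d, wte d H' η i j.1 * x j))
        + ∑ i ∈ Finset.Ico H H', owt d H' η i * σ (bia d H' η i + ∑ j : Fin d, wte d H' η i j.1 * x j) := by
    rw [Finset.range_eq_Ico, ← Finset.sum_Ico_consecutive _ (Nat.zero_le H) hHH',
      ← Finset.range_eq_Ico]
  have htail : ∀ i ∈ Finset.Ico H H',
      owt d H' η i * σ (bia d H' η i + ∑ j : Fin d, wte d H' η i j.1 * x j)
        = owt d H' η i * σ α := by
    intro i hi
    obtain ⟨hi1, hi2⟩ := Finset.mem_Ico.1 hi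
    rw [hconst _ (hpre i hi1 hi2)]
  rw [hsplit, Finset.sum_congr rfl htail, ← Finset.sum_mul]
  have hhead : ∀ i ∈ Finset.range H,
      owt d H (restr d H H' hHH' (σ α) η) i *
          σ (bia d H (restr d H H' hHH' (σ α) η) i +
            ∑ j : Fin d, wte d H (restr d H H' hHH' (σ α) η) i j.1 * x j)
        = owt d H' η i * σ (bia d H' η i + ∑ j : Fin d, wte d H' η i j.1 * x j) := by
    intro i hi
    have hiH := Finset.mem_range.1 hi
    have hsum : ∑ j : Fin d, wte d H (restr d H H' hHH' (σ α) η) i j.1 * x j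
        = ∑ j : Fin d, wte d H' η i j.1 * x j :=
      Finset.sum_congr rfl fun j _ => by rw [restr_wte _ _ _ hiH]
    rw [restr_owt _ _ _ hiH, restr_bia _ _ _ hiH, hsum]
  rw [Finset.sum_congr rfl hhead]
  ring

end real

section dist
variable (hHH' : H ≤ H') (s : ℝ)

lemma owt_dist (η η' : Fin (d * H + 2 * H + 1) → ℝ) (i : ℕ) :
    |owt d H η i - owt d H η' i| ≤ dist η η' := by
  unfold owt
  split_ifs with h
  · rw [← Real.dist_eq]; exact dist_le_pi_dist η η' _
  · simpa using dist_nonneg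

lemma bia_dist (η η' : Fin (d * H + 2 * H + 1) → ℝ) (i : ℕ) :
    |bia d H η i - bia d H η' i| ≤ dist η η' := by
  unfold bia
  split_ifs with h
  · rw [← Real.dist_eq]; exact dist_le_pi_dist η η' _
  · simpa using dist_nonneg

lemma wte_dist (η η' : Fin (d * H + 2 * H + 1) → ℝ) (i j : ℕ) :
    |wte d H η i j - wte d H η' i j| ≤ dist η η' := by
  unfold wte
  split_ifs with h
  · rw [← Real.dist_eq]; exact dist_le_pi_dist η η' _
  · simpa using dist_nonneg

lemma restr_dist (η η' : Fin (d * H' + 2 * H' + 1) → ℝ) :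
    dist (restr d H H' hHH' s η) (restr d H H' hHH' s η')
      ≤ (1 + H' * |s|) * dist η η' := by
  have h0 : (0:ℝ) ≤ dist η η' := dist_nonneg
  have hs0 : (0:ℝ) ≤ |s| := abs_nonneg s
  have hH0 : (0:ℝ) ≤ (H':ℝ) := Nat.cast_nonneg H'
  rw [dist_pi_le_iff (by positivity)]
  intro k
  unfold restr
  split_ifs with h1 h2 h3
  · exact le_trans (dist_le_pi_dist η η' _) (by nlinarith [mul_nonneg hH0 hs0])
  · exact le_trans (dist_le_pi_dist η η' _) (by nlinarith [mul_nonneg hH0 hs0])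
  · exact le_trans (dist_le_pi_dist η η' _) (by nlinarith [mul_nonneg hH0 hs0])
  · rw [Real.dist_eq]
    have hsum : |∑ i ∈ Finset.Ico H H', owt d H' η i - ∑ i ∈ Finset.Ico H H', owt d H' η' i|
        ≤ (H' : ℝ) * dist η η' := by
      rw [← Finset.sum_sub_distrib]
      refine le_trans (Finset.abs_sum_le_sum_abs _ _) ?_
      refine le_trans (Finset.sum_le_sum fun i _ => owt_dist η η' i) ?_
      rw [Finset.sum_const, nsmul_eq_mul, Nat.card_Ico]
      have : ((H' - H : ℕ) : ℝ) ≤ (H' : ℝ) := by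
        exact_mod_cast Nat.cast_le.2 (Nat.sub_le H' H)
      nlinarith
    have hlast : |η ⟨d * H' + 2 * H', by omega⟩ - η' ⟨d * H' + 2 * H', by omega⟩|
        ≤ dist η η' := by
      rw [← Real.dist_eq]; exact dist_le_pi_dist η η' _
    calc |η ⟨d * H' + 2 * H', by omega⟩ + (∑ i ∈ Finset.Ico H H', owt d H' η i) * s
          - (η' ⟨d * H' + 2 * H', by omega⟩ + (∑ i ∈ Finset.Ico H H', owt d H' η' i) * s)|
        = |(η ⟨d * H' + 2 * H', by omega⟩ - η' ⟨d * H' + 2 * H', by omega⟩)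
            + (∑ i ∈ Finset.Ico H H', owt d H' η i - ∑ i ∈ Finset.Ico H H', owt d H' η' i) * s| := by
          ring_nf
      _ ≤ |η ⟨d * H' + 2 * H', by omega⟩ - η' ⟨d * H' + 2 * H', by omega⟩|
            + |∑ i ∈ Finset.Ico H H', owt d H' η i - ∑ i ∈ Finset.Ico H H', owt d H' η' i| * |s| := by
          refine le_trans (abs_add_le _ _) ?_
          rw [abs_mul]
      _ ≤ dist η η' + ((H' : ℝ) * dist η η') * |s| :=
          add_le_add hlast (mul_le_mul_of_nonneg_right hsum hs0)
      _ = (1 + H' * |s|) * dist η η' := by ring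

end dist
end S7


/-- Embedding of local minima into wider shallow architectures: if `σ` is constant on
some open interval `(α,β)`, every local minimum of the width-`H` risk induces a local
minimum of the width-`H'` risk (`H ≤ H'`) with the same realization function. -/
theorem stmt7 (d : ℕ) (hd : 0 < d) (a b : ℝ) (hab : a ≤ b)
    (μ : Measure (Fin d → ℝ))
    (f : (Fin d → ℝ) → ℝ) (hf : Measurable f) (hfb : ∃ C, ∀ x, |f x| ≤ C)
    (σ : ℝ → ℝ) (hσm : Measurable σ)
    (hσb : ∀ r : ℝ, ∃ C, ∀ y : ℝ, |y| ≤ r → |σ y| ≤ C)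
    (α β : ℝ) (hαβ : α < β) (hconst : ∀ x ∈ Set.Ioo α β, σ x = σ α)
    (H H' : ℕ) (hHH' : H ≤ H')
    (θ : Fin (d * H + 2 * H + 1) → ℝ)
    (hθ : IsLocalMin (srisk d H a b σ μ f) θ) :
    ∃ ϑ : Fin (d * H' + 2 * H' + 1) → ℝ,
      (∀ x : Fin d → ℝ, srel d H' σ ϑ x = srel d H σ θ x) ∧
      IsLocalMin (srisk d H' a b σ μ f) ϑ := by
  classical
  set γ := (α + β) / 2 with hγ
  set s := σ α with hs
  refine ⟨S7.embed d H H' hHH' γ θ, fun x => S7.srel_embed hHH' γ σ θ x, ?_⟩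
  obtain ⟨δ, hδ0, hδ⟩ := Metric.eventually_nhds_iff.mp hθ
  set M := |a| ⊔ |b| with hM
  have hM0 : 0 ≤ M := le_trans (abs_nonneg a) le_sup_left
  set K1 : ℝ := 1 + H' * |s| with hK1
  have hK1p : 0 < K1 := by positivity
  set K2 : ℝ := 1 + d * M with hK2
  have hK2p : 0 < K2 := by positivity
  set ε := min (δ / (2 * K1)) ((β - α) / (2 * K2)) with hε
  have hε0 : 0 < ε := lt_min (by positivity) (div_pos (by linarith) (by positivity))
  have key : ∀ η, dist η (S7.embed d H H' hHH' γ θ) < ε →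
      srisk d H' a b σ μ f (S7.embed d H H' hHH' γ θ) ≤ srisk d H' a b σ μ f η := by
    intro η hdist
    have hpre : ∀ x ∈ cube d a b, ∀ i, H ≤ i → i < H' →
        S7.bia d H' η i + ∑ j : Fin d, S7.wte d H' η i j.1 * x j ∈ Set.Ioo α β := by
      intro x hx i hi1 hi2
      have hxj : ∀ j : Fin d, |x j| ≤ M := by
        intro j
        obtain ⟨hxa, hxb⟩ := hx
        have ha1 : a ≤ x j := hxa j
        have hb1 : x j ≤ b := hxb j
        rw [abs_le]
        constructor
        · have h1 : -M ≤ -|a| := neg_le_neg le_sup_left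
          have h2 : -|a| ≤ a := neg_abs_le a
          linarith
        · have h1 : b ≤ |b| := le_abs_self b
          have h2 : |b| ≤ M := le_sup_right
          linarith
      have hb : |S7.bia d H' η i - γ| ≤ dist η (S7.embed d H H' hHH' γ θ) := by
        have h := S7.bia_dist η (S7.embed d H H' hHH' γ θ) i
        rwa [S7.embed_bia_mid hHH' γ θ hi1 hi2] at h
      have hw : ∀ j : Fin d, |S7.wte d H' η i j.1| ≤ dist η (S7.embed d H H' hHH' γ θ) := by
        intro j
        have h := S7.wte_dist η (S7.embed d H H' hHH' γ θ) i j.1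
        have hz : S7.wte d H' (S7.embed d H H' hHH' γ θ) i j.1 = 0 := by
          rw [S7.embed_wte]
          unfold S7.wte
          rw [dif_neg (fun hc => absurd hc.1 (by omega))]
        rwa [hz, sub_zero] at h
      have hd0 : (0:ℝ) ≤ dist η (S7.embed d H H' hHH' γ θ) := dist_nonneg
      have h1 : |∑ j : Fin d, S7.wte d H' η i j.1 * x j|
          ≤ (d : ℝ) * (dist η (S7.embed d H H' hHH' γ θ) * M) := by
        have hstep : ∀ j : Fin d, |S7.wte d H' η i j.1 * x j|
            ≤ dist η (S7.embed d H H' hHH' γ θ) * M := fun j => by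
          rw [abs_mul]
          exact mul_le_mul (hw j) (hxj j) (abs_nonneg _) hd0
        calc |∑ j : Fin d, S7.wte d H' η i j.1 * x j|
            ≤ ∑ j : Fin d, |S7.wte d H' η i j.1 * x j| := Finset.abs_sum_le_sum_abs _ _
          _ ≤ ∑ _j : Fin d, dist η (S7.embed d H H' hHH' γ θ) * M :=
              Finset.sum_le_sum (fun j _ => hstep j)
          _ = (d : ℝ) * (dist η (S7.embed d H H' hHH' γ θ) * M) := by
              rw [Finset.sum_const, Finset.card_univ, Fintype.card_fin, nsmul_eq_mul]
      have hbound : |S7.bia d H' η i + (∑ j : Fin d, S7.wte d H' η i j.1 * x j) - γ|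
          ≤ dist η (S7.embed d H H' hHH' γ θ) * K2 := by
        have habs : |S7.bia d H' η i + (∑ j : Fin d, S7.wte d H' η i j.1 * x j) - γ|
            ≤ |S7.bia d H' η i - γ| + |∑ j : Fin d, S7.wte d H' η i j.1 * x j| := by
          have := abs_add_le (S7.bia d H' η i - γ) (∑ j : Fin d, S7.wte d H' η i j.1 * x j)
          calc |S7.bia d H' η i + (∑ j : Fin d, S7.wte d H' η i j.1 * x j) - γ|
              = |(S7.bia d H' η i - γ) + (∑ j : Fin d, S7.wte d H' η i j.1 * x j)| := by ring_nf
            _ ≤ _ := this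
        calc |S7.bia d H' η i + (∑ j : Fin d, S7.wte d H' η i j.1 * x j) - γ|
            ≤ |S7.bia d H' η i - γ| + |∑ j : Fin d, S7.wte d H' η i j.1 * x j| := habs
          _ ≤ dist η (S7.embed d H H' hHH' γ θ)
              + (d : ℝ) * (dist η (S7.embed d H H' hHH' γ θ) * M) := add_le_add hb h1
          _ = dist η (S7.embed d H H' hHH' γ θ) * K2 := by rw [hK2]; ring
      have hεK2 : ε * K2 ≤ (β - α) / 2 := by
        have h2 : ε ≤ (β - α) / (2 * K2) := min_le_right _ _
        have heq : (β - α) / (2 * K2) * K2 = (β - α) / 2 := by field_simp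
        calc ε * K2 ≤ (β - α) / (2 * K2) * K2 := mul_le_mul_of_nonneg_right h2 hK2p.le
          _ = (β - α) / 2 := heq
      have hlt : |S7.bia d H' η i + (∑ j : Fin d, S7.wte d H' η i j.1 * x j) - γ|
          < (β - α) / 2 := by
        refine lt_of_le_of_lt hbound (lt_of_lt_of_le ?_ hεK2)
        exact mul_lt_mul_of_pos_right hdist hK2p
      obtain ⟨hl, hr⟩ := abs_lt.1 hlt
      constructor <;> [skip; skip] <;> rw [hγ] at hl hr <;> [linarith; linarith]
    have e2 : srisk d H' a b σ μ f η = srisk d H a b σ μ f (S7.restr d H H' hHH' s η) := by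
      unfold srisk
      refine (MeasureTheory.setIntegral_congr_fun ?_ fun x hx => ?_).symm
      · exact measurableSet_Icc
      · show (srel d H σ (S7.restr d H H' hHH' s η) x - f x) ^ 2
            = (srel d H' σ η x - f x) ^ 2
        rw [hs, S7.srel_restr hHH' σ η α β hconst x (hpre x hx)]
    have e1 : srisk d H' a b σ μ f (S7.embed d H H' hHH' γ θ) = srisk d H a b σ μ f θ := by
      unfold srisk
      congr 1
      funext x
      rw [S7.srel_embed]
    have hclose : dist (S7.restr d H H' hHH' s η) θ < δ := by
      conv_lhs => rw [← S7.restr_embed (d := d) hHH' γ s θ]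
      have hc1 : dist (S7.restr d H H' hHH' s η) (S7.restr d H H' hHH' s (S7.embed d H H' hHH' γ θ))
          ≤ K1 * dist η (S7.embed d H H' hHH' γ θ) := S7.restr_dist hHH' s η _
      have hc2 : K1 * dist η (S7.embed d H H' hHH' γ θ) < K1 * ε :=
        mul_lt_mul_of_pos_left hdist hK1p
      have hc3 : K1 * ε ≤ K1 * (δ / (2 * K1)) :=
        mul_le_mul_of_nonneg_left (min_le_left _ _) hK1p.le
      have hc4 : K1 * (δ / (2 * K1)) = δ / 2 := by field_simp
      calc dist (S7.restr d H H' hHH' s η) (S7.restr d H H' hHH' s (S7.embed d H H' hHH' γ θ))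
          ≤ K1 * dist η (S7.embed d H H' hHH' γ θ) := hc1
        _ < K1 * ε := hc2
        _ ≤ δ / 2 := by rw [← hc4]; exact hc3
        _ < δ := by linarith
    rw [e1, e2]
    exact hδ hclose
  exact Metric.eventually_nhds_iff.mpr ⟨ε, hε0, fun η hη => key η hη⟩
end

section
/- In the shallow ANN setting, assume $\sigma$ is discriminatory for $\mu$, and let $\width \in \mathbb{N}_0$ and $\theta \in \mathbb{R}^{\mathfrak{d}_\width}$ satisfy $\mathcal{L}_\width(\theta) > 0$. Then there exists $\vartheta \in \mathbb{R}^{\mathfrak{d}_{\width+1}}$ such that $\mathcal{L}_{\width+1}(\vartheta) < \mathcal{L}_\width(\theta)$: adding one more hidden neuron allows a strictly smaller risk. -/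
open MeasureTheory Filter Topology

noncomputable section

def ext0 (d H : ℕ) (θ : Fin (d * H + 2 * H + 1) → ℝ) (w : Fin d → ℝ) (c v : ℝ) :
    Fin (d * (H + 1) + 2 * (H + 1) + 1) → ℝ := fun k =>
  if h1 : k.1 < d * H then θ ⟨k.1, by omega⟩
  else if h2 : k.1 < d * H + d then w ⟨k.1 - d * H, by omega⟩
  else if h3 : k.1 < d * H + d + H then θ ⟨d * H + (k.1 - (d * H + d)), by omega⟩
  else if h4 : k.1 = d * H + d + H then c
  else if h5 : k.1 < d * H + d + H + 1 + H then
    θ ⟨d * H + H + (k.1 - (d * H + d + H + 1)), by omega⟩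
  else if h6 : k.1 = d * H + d + H + 1 + H then v
  else θ ⟨d * H + 2 * H, by omega⟩

lemma srel_ext (d H : ℕ) (hd : 0 < d) (σ : ℝ → ℝ) (θ : Fin (d * H + 2 * H + 1) → ℝ)
    (w : Fin d → ℝ) (c v : ℝ) (x : Fin d → ℝ) :
    srel d (H + 1) σ (ext0 d H θ w c v) x =
      srel d H σ θ x + v * σ (c + ∑ j, w j * x j) := by
  have hds : d * (H + 1) = d * H + d := Nat.mul_succ d H
  unfold srel
  rw [Fin.sum_univ_castSucc]
  have hlast : (Fin.last H).1 = H := rfl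
  simp only [Fin.coe_castSucc, hlast]
  have e1 : ext0 d H θ w c v ⟨d * (H + 1) + 2 * (H + 1), by omega⟩ = θ ⟨d * H + 2 * H, by omega⟩ := by
    simp only [ext0]
    rw [dif_neg (by omega), dif_neg (by omega), dif_neg (by omega), dif_neg (by omega),
      dif_neg (by omega), dif_neg (by omega)]
  have e2 : ext0 d H θ w c v ⟨d * (H + 1) + (H + 1) + H, by omega⟩ = v := by
    simp only [ext0]
    rw [dif_neg (by omega), dif_neg (by omega), dif_neg (by omega), dif_neg (by omega),
      dif_neg (by omega), dif_pos (by omega)]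
  have e3 : ext0 d H θ w c v ⟨d * (H + 1) + H, by omega⟩ = c := by
    simp only [ext0]
    rw [dif_neg (by omega), dif_neg (by omega), dif_neg (by omega), dif_pos (by omega)]
  have e4 : ∀ j : Fin d, ext0 d H θ w c v ⟨H * d + j.1, by
      have := j.2
      have h3 : H * d = d * H := Nat.mul_comm H d
      have hds : d * (H + 1) = d * H + d := Nat.mul_succ d H
      omega⟩ = w j := by
    intro j
    have hj := j.2
    have hsd : H * d = d * H := Nat.mul_comm H d
    simp only [ext0]
    rw [dif_neg (by omega), dif_pos (by omega)]
    congr 1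
    ext
    simp
    omega
  have e5 : ∀ i : Fin H, ext0 d H θ w c v ⟨d * (H + 1) + (H + 1) + i.1, by have := i.2; omega⟩ =
      θ ⟨d * H + H + i.1, by have := i.2; omega⟩ := by
    intro i
    have hi := i.2
    simp only [ext0]
    rw [dif_neg (by omega), dif_neg (by omega), dif_neg (by omega), dif_neg (by omega),
      dif_pos (by omega)]
    congr 1
    ext
    simp
    omega
  have e6 : ∀ i : Fin H, ext0 d H θ w c v ⟨d * (H + 1) + i.1, by have := i.2; omega⟩ =
      θ ⟨d * H + i.1, by have := i.2; omega⟩ := by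
    intro i
    have hi := i.2
    simp only [ext0]
    rw [dif_neg (by omega), dif_neg (by omega), dif_pos (by omega)]
    congr 1
    ext
    simp
    omega
  have e7 : ∀ (i : Fin H) (j : Fin d),
      ext0 d H θ w c v ⟨i.1 * d + j.1, widx (Fin.castSucc i) j⟩ = θ ⟨i.1 * d + j.1, widx i j⟩ := by
    intro i j
    have hi := i.2
    have hj := j.2
    have h1 : i.1 * d + j.1 < (i.1 + 1) * d := by rw [Nat.succ_mul]; omega
    have h2 : (i.1 + 1) * d ≤ H * d := Nat.mul_le_mul_right d i.2
    have h3 : H * d = d * H := Nat.mul_comm H d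
    simp only [ext0]
    rw [dif_pos (by omega)]
  rw [e1, e2, e3]
  simp only [e5, e6, e7, e4]
  ring

lemma cube_msble (d : ℕ) (a b : ℝ) : MeasurableSet (cube d a b) := measurableSet_Icc

lemma mem_cube_abs {d : ℕ} {a b : ℝ} {x : Fin d → ℝ} (hx : x ∈ cube d a b) (j : Fin d) :
    |x j| ≤ max |a| |b| := by
  obtain ⟨h1, h2⟩ := hx
  have ha : a ≤ x j := h1 j
  have hb : x j ≤ b := h2 j
  rw [abs_le]
  constructor
  · have : -|a| ≤ a := neg_abs_le a
    have : -(max |a| |b|) ≤ -|a| := by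
      simp [le_max_left]
    linarith [neg_abs_le a]
  · exact hb.trans ((le_abs_self b).trans (le_max_right _ _))

lemma aff_msble {d : ℕ} (σ : ℝ → ℝ) (hσm : Measurable σ) (w : Fin d → ℝ) (c : ℝ) :
    Measurable fun x : Fin d → ℝ => σ (c + ∑ j, w j * x j) := by
  apply hσm.comp
  exact measurable_const.add (Finset.measurable_sum _ fun j _ =>
    (by fun_prop))

lemma srel_msble (d H : ℕ) (σ : ℝ → ℝ) (hσm : Measurable σ) (θ : Fin (d * H + 2 * H + 1) → ℝ) :
    Measurable (srel d H σ θ) := by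
  unfold srel
  exact measurable_const.add (Finset.measurable_sum _ fun i _ =>
    (aff_msble σ hσm _ _).const_mul _)

lemma aff_bound {d : ℕ} {a b : ℝ} (w : Fin d → ℝ) (c : ℝ) {x : Fin d → ℝ}
    (hx : x ∈ cube d a b) :
    |c + ∑ j, w j * x j| ≤ |c| + ∑ j, |w j| * max |a| |b| := by
  refine (abs_add_le _ _).trans ?_
  gcongr
  refine (Finset.abs_sum_le_sum_abs _ _).trans ?_
  apply Finset.sum_le_sum
  intro j _
  rw [abs_mul]
  exact mul_le_mul_of_nonneg_left (mem_cube_abs hx j) (abs_nonneg _)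

lemma srel_bdd (d H : ℕ) (a b : ℝ) (σ : ℝ → ℝ)
    (hσb : ∀ r : ℝ, ∃ C, ∀ y : ℝ, |y| ≤ r → |σ y| ≤ C)
    (θ : Fin (d * H + 2 * H + 1) → ℝ) :
    ∃ C, ∀ x ∈ cube d a b, |srel d H σ θ x| ≤ C := by
  choose Cb hCb using fun i : Fin H =>
    hσb (|θ ⟨d * H + i.1, by have := i.2; omega⟩| + ∑ j, |θ ⟨i.1 * d + j.1, widx i j⟩| * max |a| |b|)
  refine ⟨|θ ⟨d * H + 2 * H, by omega⟩| +
    ∑ i : Fin H, |θ ⟨d * H + H + i.1, by have := i.2; omega⟩| * Cb i, ?_⟩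
  intro x hx
  unfold srel
  refine (abs_add_le _ _).trans ?_
  gcongr
  refine (Finset.abs_sum_le_sum_abs _ _).trans ?_
  apply Finset.sum_le_sum
  intro i _
  rw [abs_mul]
  have h1 : |σ (θ ⟨d * H + i.1, by have := i.2; omega⟩ +
      ∑ j, θ ⟨i.1 * d + j.1, widx i j⟩ * x j)| ≤ Cb i :=
    hCb i _ (aff_bound _ _ hx)
  have : (0:ℝ) ≤ |θ ⟨d * H + H + i.1, by have := i.2; omega⟩| := abs_nonneg _
  gcongr

lemma int_of_bdd {d : ℕ} {a b : ℝ} {μ : Measure (Fin d → ℝ)} [IsFiniteMeasure μ]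
    {g : (Fin d → ℝ) → ℝ} (hg : Measurable g) {C : ℝ}
    (hb : ∀ x ∈ cube d a b, |g x| ≤ C) : Integrable g (μ.restrict (cube d a b)) := by
  refine ⟨hg.aestronglyMeasurable, ?_⟩
  apply MeasureTheory.HasFiniteIntegral.of_bounded (C := C)
  filter_upwards [ae_restrict_mem (cube_msble d a b)] with x hx
  simpa using hb x hx

end

/-- If `σ` is discriminatory for `μ` and the width-`H` risk at `θ` is positive, then a
shallow ANN with one additional hidden neuron achieves a strictly smaller risk. -/
theorem stmt8 (d : ℕ) (hd : 0 < d) (a b : ℝ) (hab : a ≤ b)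
    (μ : Measure (Fin d → ℝ)) [IsFiniteMeasure μ]
    (f : (Fin d → ℝ) → ℝ) (hf : Measurable f) (hfb : ∃ C, ∀ x, |f x| ≤ C)
    (σ : ℝ → ℝ) (hσm : Measurable σ)
    (hσb : ∀ r : ℝ, ∃ C, ∀ y : ℝ, |y| ≤ r → |σ y| ≤ C)
    (hdisc : Discriminatory d (cube d a b) μ σ)
    (H : ℕ) (θ : Fin (d * H + 2 * H + 1) → ℝ)
    (hpos : 0 < srisk d H a b σ μ f θ) :
    ∃ ϑ : Fin (d * (H + 1) + 2 * (H + 1) + 1) → ℝ,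
      srisk d (H + 1) a b σ μ f ϑ < srisk d H a b σ μ f θ := by
  obtain ⟨Cf, hCf⟩ := hfb
  obtain ⟨Cs, hCs⟩ := srel_bdd d H a b σ hσb θ
  have hcube_ne : (fun _ : Fin d => a) ∈ cube d a b := by
    constructor <;> intro j <;> simp [hab]
  set φ : (Fin d → ℝ) → ℝ := fun x => srel d H σ θ x - f x with hφ
  have hφm : Measurable φ := (srel_msble d H σ hσm θ).sub hf
  have hφb : ∀ x ∈ cube d a b, |φ x| ≤ Cs + Cf := by
    intro x hx
    calc |φ x| = |srel d H σ θ x - f x| := rfl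
      _ ≤ |srel d H σ θ x| + |f x| := abs_sub _ _
      _ ≤ Cs + Cf := add_le_add (hCs x hx) (hCf x)
  have hφint : Integrable φ (μ.restrict (cube d a b)) := int_of_bdd hφm hφb
  have hC0 : 0 ≤ Cs + Cf := le_trans (abs_nonneg _) (hφb _ hcube_ne)
  have hnz : ¬ ∀ (w : Fin d → ℝ) (c : ℝ),
      ∫ x in cube d a b, σ ((∑ j, w j * x j) + c) * φ x ∂μ = 0 := by
    intro hall
    have h0 := hdisc φ hφm hφint hall
    have hzero : (fun x => |φ x|) =ᵐ[μ.restrict (cube d a b)] 0 :=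
      (integral_eq_zero_iff_of_nonneg (fun x => abs_nonneg _) hφint.abs).1 h0
    have hz2 : (fun x => (srel d H σ θ x - f x) ^ 2)
        =ᵐ[μ.restrict (cube d a b)] 0 := by
      filter_upwards [hzero] with x hx
      have : φ x = 0 := abs_eq_zero.1 hx
      have hx0 : srel d H σ θ x - f x = 0 := this
      simp [hx0]
    have : srisk d H a b σ μ f θ = 0 := by
      unfold srisk
      exact integral_eq_zero_of_ae hz2
    linarith
  push_neg at hnz
  obtain ⟨w, c, hI⟩ := hnz
  set g : (Fin d → ℝ) → ℝ := fun x => σ ((∑ j, w j * x j) + c) with hg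
  have hgm : Measurable g :=
    hσm.comp ((Finset.measurable_sum _ fun j _ =>
      (by fun_prop)).add measurable_const)
  obtain ⟨Cg, hCg⟩ := hσb (|c| + ∑ j, |w j| * max |a| |b|)
  have hgb : ∀ x ∈ cube d a b, |g x| ≤ Cg := by
    intro x hx
    have := aff_bound (a := a) (b := b) w c hx
    rw [add_comm c] at this
    exact hCg _ this
  have hCg0 : 0 ≤ Cg := le_trans (abs_nonneg _) (hgb _ hcube_ne)
  set I := ∫ x in cube d a b, g x * φ x ∂μ with hIdef
  have hI' : I ≠ 0 := hI
  set G := ∫ x in cube d a b, g x ^ 2 ∂μ with hGdef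
  have hG0 : 0 ≤ G := integral_nonneg fun x => sq_nonneg _
  set v : ℝ := -I / (G + 1) with hv
  refine ⟨ext0 d H θ w c v, ?_⟩
  have hrepr : ∀ x, srel d (H + 1) σ (ext0 d H θ w c v) x - f x = φ x + v * g x := by
    intro x
    rw [srel_ext d H hd σ θ w c v x, add_comm c (∑ j, w j * x j)]
    show srel d H σ θ x + v * g x - f x = φ x + v * g x
    rw [hφ]
    ring
  have int1 : Integrable (fun x => φ x ^ 2) (μ.restrict (cube d a b)) := by
    apply int_of_bdd (hφm.pow_const 2) (C := (Cs + Cf) ^ 2)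
    intro x hx
    rw [abs_pow, sq_abs, ← sq_abs]
    exact pow_le_pow_left₀ (abs_nonneg _) (hφb x hx) 2
  have int2 : Integrable (fun x => g x * φ x) (μ.restrict (cube d a b)) := by
    apply int_of_bdd (hgm.mul hφm) (C := Cg * (Cs + Cf))
    intro x hx
    rw [Pi.mul_apply, abs_mul]
    exact mul_le_mul (hgb x hx) (hφb x hx) (abs_nonneg _) hCg0
  have int3 : Integrable (fun x => g x ^ 2) (μ.restrict (cube d a b)) := by
    apply int_of_bdd (hgm.pow_const 2) (C := Cg ^ 2)
    intro x hx
    rw [abs_pow, sq_abs, ← sq_abs]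
    exact pow_le_pow_left₀ (abs_nonneg _) (hgb x hx) 2
  have hexp : srisk d (H + 1) a b σ μ f (ext0 d H θ w c v)
      = srisk d H a b σ μ f θ + ((2 * v) * I + v ^ 2 * G) := by
    unfold srisk
    simp_rw [hrepr]
    have hpt : ∀ x, (φ x + v * g x) ^ 2
        = φ x ^ 2 + ((2 * v) * (g x * φ x) + v ^ 2 * g x ^ 2) := by intro x; ring
    simp_rw [hpt]
    have int4 : Integrable (fun x => (2 * v) * (g x * φ x) + v ^ 2 * g x ^ 2)
        (μ.restrict (cube d a b)) := (int2.const_mul _).add (int3.const_mul _)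
    rw [integral_add int1 int4, integral_add (int2.const_mul _) (int3.const_mul _),
      integral_const_mul, integral_const_mul, ← hIdef, ← hGdef]
  rw [hexp]
  have hI2 : 0 < I ^ 2 := lt_of_le_of_ne (sq_nonneg I) (Ne.symm (pow_ne_zero 2 hI'))
  have hG1 : 0 < G + 1 := by linarith
  have key : (2 * v) * I + v ^ 2 * G < 0 := by
    rw [hv]
    have heq : (2 * (-I / (G + 1))) * I + (-I / (G + 1)) ^ 2 * G
        = -(I ^ 2 * (G + 2) / (G + 1) ^ 2) := by
      field_simp
      ring
    rw [heq]
    have h2 : 0 < I ^ 2 * (G + 2) / (G + 1) ^ 2 := by positivity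
    linarith
  linarith
end

section
/- In the shallow ANN setting with $\sigma$ discriminatory for $\mu$, let $\width \in \mathbb{N}_0$ with $\width < \mathscr{K}$ (so $\mathbf{m}_\width > 0$) and let $\theta \in \mathbb{R}^{\mathfrak{d}_\width}$ be a global minimizer, $\mathcal{L}_\width(\theta) = \mathbf{m}_\width$. Then $\mathbf{m}_{\width+1} < \mathbf{m}_\width$: the infimum risk decreases strictly when adding one hidden neuron. -/
open MeasureTheory Filter Topology

/-!
If the residual `φ = srel θ - f` of a minimizer were orthogonal in `L²(μ|[a,b]^d)` to every
neuron `x ↦ σ (w ⬝ x + c)`, the discriminatory property would force `φ = 0` a.e., i.e. zero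
risk. So some neuron `g` has `∫ g φ ≠ 0`, and appending it with outer weight `v` turns the
risk into `‖φ‖² + 2 v ⟨g, φ⟩ + v² ‖g‖²`, which is below `‖φ‖²` for
`v = -⟨g, φ⟩ / (‖g‖² + 1)`.
-/

open scoped ENNReal

/-- The new neuron `x ↦ v * σ (c + ∑ j, w j * x j)` becomes the last one in each parameter block
of the width-`H + 1` layout. -/
def extendParam {d H : ℕ} (θ : Fin (d * H + 2 * H + 1) → ℝ) (w : Fin d → ℝ) (c v : ℝ) :
    Fin (d * (H + 1) + 2 * (H + 1) + 1) → ℝ := fun k =>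
  if h₁ : k < d * H then θ ⟨k, by omega⟩
  else if h₂ : k < d * H + d then w ⟨k - d * H, by omega⟩
  else if h₃ : k < d * H + d + H then θ ⟨k - d, by omega⟩
  else if k = d * H + d + H then c
  else if h₅ : k < d * H + d + 2 * H + 1 then θ ⟨k - (d + 1), by omega⟩
  else if k = d * H + d + 2 * H + 1 then v
  else θ ⟨d * H + 2 * H, by omega⟩

section extendParam

variable {d H : ℕ} (θ : Fin (d * H + 2 * H + 1) → ℝ) (w : Fin d → ℝ) (c v : ℝ)

lemma extendParam_inner_castSucc (i : Fin H) (j : Fin d) (hk) :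
    extendParam θ w c v ⟨i * d + j, hk⟩ = θ ⟨i * d + j, widx i j⟩ := by
  have : i * d + j < d * H := by nlinarith [i.2, j.2]
  simp only [extendParam, dif_pos this]

lemma extendParam_inner_last (j : Fin d) (hk) : extendParam θ w c v ⟨H * d + j, hk⟩ = w j := by
  have := Nat.mul_comm H d
  simp (disch := omega) only [extendParam, dif_neg, dif_pos]
  congr; omega

lemma extendParam_bias_castSucc (i : Fin H) (hk) :
    extendParam θ w c v ⟨d * (H + 1) + i, hk⟩ = θ ⟨d * H + i, by omega⟩ := by
  have : d * (H + 1) = d * H + d := Nat.mul_succ d H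
  have := i.2
  simp (disch := omega) only [extendParam, dif_neg, dif_pos]
  congr; omega

lemma extendParam_bias_last (hk) : extendParam θ w c v ⟨d * (H + 1) + H, hk⟩ = c := by
  have : d * (H + 1) = d * H + d := Nat.mul_succ d H
  simp (disch := omega) only [extendParam, dif_neg, if_pos]

lemma extendParam_outer_castSucc (i : Fin H) (hk) :
    extendParam θ w c v ⟨d * (H + 1) + (H + 1) + i, hk⟩ = θ ⟨d * H + H + i, by omega⟩ := by
  have : d * (H + 1) = d * H + d := Nat.mul_succ d H
  have := i.2
  simp (disch := omega) only [extendParam, dif_neg, dif_pos, if_neg]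
  congr; omega

lemma extendParam_outer_last (hk) : extendParam θ w c v ⟨d * (H + 1) + (H + 1) + H, hk⟩ = v := by
  have : d * (H + 1) = d * H + d := Nat.mul_succ d H
  simp (disch := omega) only [extendParam, dif_neg, if_neg, if_pos]

lemma extendParam_outputBias (hk) :
    extendParam θ w c v ⟨d * (H + 1) + 2 * (H + 1), hk⟩ = θ ⟨d * H + 2 * H, by omega⟩ := by
  have : d * (H + 1) = d * H + d := Nat.mul_succ d H
  simp (disch := omega) only [extendParam, dif_neg, if_neg]

theorem srel_extendParam (σ : ℝ → ℝ) (x : Fin d → ℝ) :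
    srel d (H + 1) σ (extendParam θ w c v) x = srel d H σ θ x + v * σ (c + ∑ j, w j * x j) := by
  simp only [srel, Fin.sum_univ_castSucc, Fin.val_castSucc, Fin.val_last,
    extendParam_inner_castSucc, extendParam_inner_last, extendParam_bias_castSucc, extendParam_bias_last,
    extendParam_outer_castSucc, extendParam_outer_last, extendParam_outputBias]
  ring

end extendParam

section integrability

variable {d : ℕ} {K : Set (Fin d → ℝ)} {μ : Measure (Fin d → ℝ)} [IsFiniteMeasure μ]
  {σ : ℝ → ℝ}

lemma memLp_comp_affine (hK : IsCompact K) (hσm : Measurable σ)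
    (hσb : ∀ r : ℝ, ∃ C, ∀ y : ℝ, |y| ≤ r → |σ y| ≤ C) (p : ℝ≥0∞) (w : Fin d → ℝ) (c : ℝ) :
    MemLp (fun x => σ (c + ∑ j, w j * x j)) p (μ.restrict K) := by
  have haff : Continuous fun x : Fin d → ℝ => c + ∑ j, w j * x j := by fun_prop
  obtain ⟨r, hr⟩ := hK.exists_bound_of_continuousOn haff.continuousOn
  obtain ⟨C, hC⟩ := hσb r
  refine MemLp.of_bound (hσm.comp haff.measurable).aestronglyMeasurable C ?_
  filter_upwards [ae_restrict_mem hK.measurableSet] with x hx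
  exact hC _ (hr x hx)

lemma measurable_srel (hσm : Measurable σ) {H : ℕ} (θ : Fin (d * H + 2 * H + 1) → ℝ) :
    Measurable (srel d H σ θ) := by
  unfold srel
  fun_prop

lemma memLp_srel (hK : IsCompact K) (hσm : Measurable σ)
    (hσb : ∀ r : ℝ, ∃ C, ∀ y : ℝ, |y| ≤ r → |σ y| ≤ C) (p : ℝ≥0∞) {H : ℕ}
    (θ : Fin (d * H + 2 * H + 1) → ℝ) : MemLp (srel d H σ θ) p (μ.restrict K) :=
  (memLp_const (θ ⟨d * H + 2 * H, by omega⟩)).add <| memLp_finsetSum _ fun _ _ =>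
    (memLp_comp_affine hK hσm hσb p _ _).const_mul _

end integrability

lemma Discriminatory.exists_integral_ne_zero {d : ℕ} {K : Set (Fin d → ℝ)}
    {μ : Measure (Fin d → ℝ)} {σ : ℝ → ℝ} (hσ : Discriminatory d K μ σ)
    {φ : (Fin d → ℝ) → ℝ} (hφm : Measurable φ) (hφ : Integrable φ (μ.restrict K))
    (hφ0 : ¬ φ =ᵐ[μ.restrict K] 0) :
    ∃ (w : Fin d → ℝ) (c : ℝ), ∫ x in K, σ ((∑ j, w j * x j) + c) * φ x ∂μ ≠ 0 := by
  by_contra! h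
  have habs := hσ φ hφm hφ h
  rw [integral_eq_zero_iff_of_nonneg (fun _ => abs_nonneg _) hφ.abs] at habs
  exact hφ0 (habs.mono fun _ => abs_eq_zero.1)

lemma exists_integral_add_mul_sq_lt {α : Type*} [MeasurableSpace α] {ν : Measure α}
    {φ g : α → ℝ} (hφ : MemLp φ 2 ν) (hg : MemLp g 2 ν) (hgφ : ∫ x, g x * φ x ∂ν ≠ 0) :
    ∃ v : ℝ, ∫ x, (φ x + v * g x) ^ 2 ∂ν < ∫ x, φ x ^ 2 ∂ν := by
  set B := ∫ x, g x * φ x ∂ν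
  set S := ∫ x, g x ^ 2 ∂ν
  have hS : 0 ≤ S := integral_nonneg fun _ => sq_nonneg _
  have hexpand (v : ℝ) :
      ∫ x, (φ x + v * g x) ^ 2 ∂ν = ∫ x, φ x ^ 2 ∂ν + 2 * v * B + v ^ 2 * S := by
    have hgφ_int : Integrable (fun x => g x * φ x) ν := hg.integrable_mul hφ
    calc ∫ x, (φ x + v * g x) ^ 2 ∂ν
        = ∫ x, (φ x ^ 2 + 2 * v * (g x * φ x)) + v ^ 2 * g x ^ 2 ∂ν := by
          congr with x; ring
      _ = _ := by
          rw [integral_add, integral_add, integral_const_mul, integral_const_mul]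
          exacts [hφ.integrable_sq, hgφ_int.const_mul _, hφ.integrable_sq.add (hgφ_int.const_mul _),
            hg.integrable_sq.const_mul _]
  refine ⟨-B / (S + 1), ?_⟩
  have hdrop : 2 * (-B / (S + 1)) * B + (-B / (S + 1)) ^ 2 * S
      = -(B ^ 2 * (S + 2)) / (S + 1) ^ 2 := by
    field_simp
    ring
  have hneg : -(B ^ 2 * (S + 2)) / (S + 1) ^ 2 < 0 :=
    div_neg_of_neg_of_pos (neg_neg_of_pos (by positivity)) (by positivity)
  rw [hexpand]
  linarith

lemma sinf_le_srisk {d H : ℕ} {a b : ℝ} {σ : ℝ → ℝ} {μ : Measure (Fin d → ℝ)}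
    {f : (Fin d → ℝ) → ℝ} (θ : Fin (d * H + 2 * H + 1) → ℝ) :
    sinf d H a b σ μ f ≤ srisk d H a b σ μ f θ :=
  ciInf_le ⟨0, by rintro _ ⟨θ', rfl⟩; exact integral_nonneg fun _ => sq_nonneg _⟩ θ

theorem stmt10_general (d : ℕ) (a b : ℝ)
    (μ : Measure (Fin d → ℝ)) [IsFiniteMeasure μ]
    (f : (Fin d → ℝ) → ℝ) (hf : Measurable f) (hfb : ∃ C, ∀ x, |f x| ≤ C)
    (σ : ℝ → ℝ) (hσm : Measurable σ)
    (hσb : ∀ r : ℝ, ∃ C, ∀ y : ℝ, |y| ≤ r → |σ y| ≤ C)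
    (hdisc : Discriminatory d (cube d a b) μ σ)
    (H : ℕ) (hHK : ∀ k : ℕ, k ≤ H → sinf d k a b σ μ f ≠ 0)
    (θ : Fin (d * H + 2 * H + 1) → ℝ)
    (hθ : srisk d H a b σ μ f θ = sinf d H a b σ μ f) :
    sinf d (H + 1) a b σ μ f < sinf d H a b σ μ f := by
  obtain ⟨Cf, hCf⟩ := hfb
  have hK : IsCompact (cube d a b) := isCompact_Icc
  set φ := fun x => srel d H σ θ x - f x
  have hφ : MemLp φ 2 (μ.restrict (cube d a b)) :=
    (memLp_srel hK hσm hσb 2 θ).sub (.of_bound hf.aestronglyMeasurable Cf (ae_of_all _ hCf))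
  have hφ0 : ¬ φ =ᵐ[μ.restrict (cube d a b)] 0 := fun h0 =>
    hHK H le_rfl (hθ ▸ integral_eq_zero_of_ae (h0.mono fun x hx => by simpa [φ] using hx))
  obtain ⟨w, c, hwc⟩ := hdisc.exists_integral_ne_zero (φ := φ)
    ((measurable_srel hσm θ).sub hf) (hφ.integrable one_le_two) hφ0
  obtain ⟨v, hv⟩ := exists_integral_add_mul_sq_lt hφ (memLp_comp_affine hK hσm hσb 2 w c)
    (by simpa only [add_comm c] using hwc)
  calc sinf d (H + 1) a b σ μ f
      ≤ srisk d (H + 1) a b σ μ f (extendParam θ w c v) := sinf_le_srisk _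
    _ = ∫ x in cube d a b, (φ x + v * σ (c + ∑ j, w j * x j)) ^ 2 ∂μ := by
      simp only [srisk, srel_extendParam, φ]
      congr with x; ring
    _ < sinf d H a b σ μ f := hθ ▸ hv

/-- Below the width `𝒦` at which zero risk first becomes attainable, the infimum of
the risk decreases strictly when one hidden neuron is added, provided a global
minimizer of the width-`H` risk exists. -/
theorem stmt10 (d : ℕ) (hd : 0 < d) (a b : ℝ) (hab : a ≤ b)
    (μ : Measure (Fin d → ℝ)) [IsFiniteMeasure μ]
    (f : (Fin d → ℝ) → ℝ) (hf : Measurable f) (hfb : ∃ C, ∀ x, |f x| ≤ C)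
    (σ : ℝ → ℝ) (hσm : Measurable σ)
    (hσb : ∀ r : ℝ, ∃ C, ∀ y : ℝ, |y| ≤ r → |σ y| ≤ C)
    (hdisc : Discriminatory d (cube d a b) μ σ)
    (H : ℕ) (hHK : ∀ k : ℕ, k ≤ H → sinf d k a b σ μ f ≠ 0)
    (θ : Fin (d * H + 2 * H + 1) → ℝ)
    (hθ : srisk d H a b σ μ f θ = sinf d H a b σ μ f) :
    sinf d (H + 1) a b σ μ f < sinf d H a b σ μ f :=
  stmt10_general d a b μ f hf hfb σ hσm hσb hdisc H hHK θ hθ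
end
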